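/- Let H be a model graph in which the neighborhoods of labels A and C coincide (both the full and dotted neighborhoods: N_full({A}) = N_full({C}) and N_dotted({A}) = N_dotted({C})) and similarly for B and D. Then a simple graph G admits an H-partition if and only if G admits a partition of V(G) into four nonempty classes V_A, V_B, V_C, V_D such that the combined classes V_A ∪ V_C and V_B ∪ V_D satisfy all full/dotted constraints of H restricted to the two 'super-labels' {A,C} and {B,D}: i.e., if (A,B) is a full edge of H then every vertex of V_A ∪ V_C is adjacent to every vertex of V_B ∪ V_D, and if (A,B) is dotted then every vertex of V_A ∪ V_C is nonadjacent to every vertex of V_B ∪ V_D. -/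

import Mathlib

inductive Label : Type
  | A | B | C | D
deriving DecidableEq

instance : Fintype Label :=
  ⟨{Label.A, Label.B, Label.C, Label.D}, fun x => by cases x <;> simp⟩

/-- A model graph: an undirected graph on the four labels A,B,C,D, each edge
marked full or dotted (never both), symmetric and irreflexive. -/
structure ModelGraph : Type where
  full : Label → Label → Bool
  dotted : Label → Label → Bool
  full_symm : ∀ p q, full p q = full q p
  dotted_symm : ∀ p q, dotted p q = dotted q p
  full_irrefl : ∀ p, full p p = false
  dotted_irrefl : ∀ p, dotted p p = false
  not_both : ∀ p q, ¬ (full p q = true ∧ dotted p q = true)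

/-- `ℓ` is an `H`-partition of `G`: all four classes nonempty, full edges of `H`
force complete adjacency, dotted edges force complete nonadjacency. -/
def IsHPartition {V : Type} (G : SimpleGraph V) (H : ModelGraph) (ℓ : V → Label) : Prop :=
  (∀ p : Label, ∃ v, ℓ v = p) ∧
  (∀ u v, H.full (ℓ u) (ℓ v) = true → G.Adj u v) ∧
  (∀ u v, H.dotted (ℓ u) (ℓ v) = true → ¬ G.Adj u v)

/-- Label `p` is possible for vertex `v` relative to the partial labeling `pl`. -/
def Possible {V : Type} (G : SimpleGraph V) (H : ModelGraph)
    (pl : V → Option Label) (v : V) (p : Label) : Prop :=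
  (∀ q y, H.full p q = true → pl y = some q → G.Adj v y) ∧
  (∀ q y, H.dotted p q = true → pl y = some q → ¬ G.Adj v y)

/-- Full-edge neighborhood of a set of labels. -/
def NFull (H : ModelGraph) (L : Finset Label) : Finset Label :=
  Finset.univ.filter (fun q => ∃ p ∈ L, H.full p q = true)

/-- Dotted-edge neighborhood of a set of labels. -/
def NDotted (H : ModelGraph) (L : Finset Label) : Finset Label :=
  Finset.univ.filter (fun q => ∃ p ∈ L, H.dotted p q = true)

/-- Class sizes `a,b,c,d` as a function of the label. -/
def cnt (a b c d : ℕ) : Label → ℕ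
  | .A => a | .B => b | .C => c | .D => d

/- Since `A` and `C` have the same full and dotted neighbours, and so do `B` and `D`, every
edge of `H` joins `{A, C}` to `{B, D}` (an edge `A–C` would be a loop at `A`), and it is present
exactly when `A–B` is. So each constraint of an `H`-partition is one of the two super-label
constraints, and conversely. -/

lemma ModelGraph.full_eq_of_nFull_eq {H : ModelGraph} {p q : Label}
    (h : NFull H {p} = NFull H {q}) : H.full p = H.full q := by
  funext r
  have hr := Finset.ext_iff.mp h r
  simp only [NFull, Finset.mem_filter, Finset.mem_univ, Finset.mem_singleton, exists_eq_left,
    true_and] at hr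
  exact Bool.eq_iff_iff.mpr hr

lemma ModelGraph.dotted_eq_of_nDotted_eq {H : ModelGraph} {p q : Label}
    (h : NDotted H {p} = NDotted H {q}) : H.dotted p = H.dotted q := by
  funext r
  have hr := Finset.ext_iff.mp h r
  simp only [NDotted, Finset.mem_filter, Finset.mem_univ, Finset.mem_singleton, exists_eq_left,
    true_and] at hr
  exact Bool.eq_iff_iff.mpr hr

namespace Label

lemma rel_eq_true_iff {R : Label → Label → Bool} (hsymm : ∀ p q, R p q = R q p)
    (hirrefl : ∀ p, R p p = false) (hAC : R A = R C) (hBD : R B = R D) (p q : Label) :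
    R p q = true ↔ R A B = true ∧
      ((p = A ∨ p = C) ∧ (q = B ∨ q = D) ∨ (q = A ∨ q = C) ∧ (p = B ∨ p = D)) := by
  have hC : ∀ r, R r C = R r A := fun r => by rw [hsymm, ← hAC, hsymm]
  have hD : ∀ r, R r D = R r B := fun r => by rw [hsymm, ← hBD, hsymm]
  have hBA : R B A = R A B := hsymm _ _
  cases p <;> cases q <;> simp [← hAC, ← hBD, hC, hD, hBA, hirrefl]

lemma forall_rel_imp_iff {R : Label → Label → Bool} (hsymm : ∀ p q, R p q = R q p)
    (hirrefl : ∀ p, R p p = false) (hAC : R A = R C) (hBD : R B = R D)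
    {V : Type} {P : V → V → Prop} (hP : Std.Symm P) (ℓ : V → Label) :
    (∀ u v, R (ℓ u) (ℓ v) = true → P u v) ↔
      (R A B = true → ∀ u v, (ℓ u = A ∨ ℓ u = C) → (ℓ v = B ∨ ℓ v = D) → P u v) := by
  have key := rel_eq_true_iff hsymm hirrefl hAC hBD
  constructor
  · intro h hAB u v hu hv
    exact h u v ((key _ _).mpr ⟨hAB, Or.inl ⟨hu, hv⟩⟩)
  · intro h u v huv
    obtain ⟨hAB, ⟨hu, hv⟩ | ⟨hv, hu⟩⟩ := (key _ _).mp huv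
    · exact h hAB u v hu hv
    · exact hP.symm v u (h hAB v u hv hu)

end Label

/-- if labels A and C impose identical constraints, as do B and D,
then G admits an H-partition iff it admits a partition into four nonempty
classes satisfying the constraints of the two super-labels {A,C} and {B,D}. -/
theorem stmt_13 (H : ModelGraph)
    (hAC_full : NFull H {Label.A} = NFull H {Label.C})
    (hAC_dot : NDotted H {Label.A} = NDotted H {Label.C})
    (hBD_full : NFull H {Label.B} = NFull H {Label.D})
    (hBD_dot : NDotted H {Label.B} = NDotted H {Label.D})
    {V : Type} (G : SimpleGraph V) :
    (∃ ℓ : V → Label, IsHPartition G H ℓ) ↔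
      ∃ ℓ : V → Label, (∀ p : Label, ∃ v, ℓ v = p) ∧
        (H.full Label.A Label.B = true →
          ∀ u v, (ℓ u = Label.A ∨ ℓ u = Label.C) → (ℓ v = Label.B ∨ ℓ v = Label.D) →
            G.Adj u v) ∧
        (H.dotted Label.A Label.B = true →
          ∀ u v, (ℓ u = Label.A ∨ ℓ u = Label.C) → (ℓ v = Label.B ∨ ℓ v = Label.D) →
            ¬ G.Adj u v) := by
  refine exists_congr fun ℓ => and_congr Iff.rfl (and_congr ?_ ?_)
  · exact Label.forall_rel_imp_iff H.full_symm H.full_irrefl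
      (ModelGraph.full_eq_of_nFull_eq hAC_full) (ModelGraph.full_eq_of_nFull_eq hBD_full)
      G.symm ℓ
  · exact Label.forall_rel_imp_iff H.dotted_symm H.dotted_irrefl
      (ModelGraph.dotted_eq_of_nDotted_eq hAC_dot) (ModelGraph.dotted_eq_of_nDotted_eq hBD_dot)
      ⟨fun _ _ h h' => h h'.symm⟩ ℓ
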